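/- arXiv:2003.12909 — 10 statements merged into one kernel-verified Lean document; each statement's English description precedes it below -/
import Mathlib

section
/- Let S be a nonempty finite set, K : S × S → ℝ a row-stochastic matrix (K(x,y) ≥ 0 and Σ_y K(x,y) = 1 for all x), μ a stationary distribution of K, s ∈ S, and h : S → ℝ a hitting-time solution for target s under K. Then μ(s) · (1 + Σ_y K(s,y)·h(y)) = 1. -/
/-- Kac-type identity: for a finite-state row-stochastic matrix `K` with stationary
distribution `μ`, a target state `s`, and a hitting-time solution `h` for `s`,
we have `μ s * (1 + ∑ y, K s y * h y) = 1`. -/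
theorem stationary_times_return_time_eq_one
    {S : Type*} [Fintype S] [Nonempty S] [DecidableEq S]
    (K : S → S → ℝ)
    (hK_nonneg : ∀ x y, 0 ≤ K x y)
    (hK_row : ∀ x, ∑ y, K x y = 1)
    (μ : S → ℝ)
    (hμ_nonneg : ∀ x, 0 ≤ μ x)
    (hμ_sum : ∑ x, μ x = 1)
    (hμ_stat : ∀ y, μ y = ∑ x, μ x * K x y)
    (s : S) (h : S → ℝ)
    (hh_s : h s = 0)
    (hh : ∀ x, x ≠ s → h x = 1 + ∑ y, K x y * h y) :
    μ s * (1 + ∑ y, K s y * h y) = 1 := by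
  have key : ∑ x, μ x * (1 + ∑ y, K x y * h y) = 1 + ∑ y, μ y * h y := by
    have : ∑ x, μ x * (1 + ∑ y, K x y * h y)
        = ∑ x, μ x + ∑ x, ∑ y, μ x * (K x y * h y) := by
      rw [← Finset.sum_add_distrib]
      congr 1; ext x
      rw [mul_add, mul_one, Finset.mul_sum]
    rw [this, hμ_sum, Finset.sum_comm]
    congr 1
    refine Finset.sum_congr rfl fun y _ => ?_
    rw [hμ_stat y, Finset.sum_mul]
    exact Finset.sum_congr rfl fun x _ => by ring
  have split : ∑ x, μ x * (1 + ∑ y, K x y * h y)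
      = μ s * (1 + ∑ y, K s y * h y) + ∑ x, μ x * h x := by
    rw [← Finset.add_sum_erase _ _ (Finset.mem_univ s),
        ← Finset.add_sum_erase _ (fun x => μ x * h x) (Finset.mem_univ s),
        hh_s, mul_zero, zero_add]
    congr 1
    refine Finset.sum_congr rfl fun x hx => ?_
    rw [hh x (Finset.ne_of_mem_erase hx)]
  have := key ▸ split
  linarith
end

section
/- Let P and P̄ be transition kernels with P(x, π†(x), s') = P̄(x, π†(x), s') for all x, s'. Fix s ∈ S and a ≠ π†(s), let K' be the Markov kernel induced by (P, π†{s;a}), let μ' be a stationary distribution of K', and let h̄ : S → ℝ be a hitting-time solution for target s under the Markov kernel K̄ induced by (P̄, π†), with h̄(x) ≥ 0 for all x. Then μ'(s) · (1 + Σ_{s' ≠ s} P(s,a,s')·h̄(s')) = 1; consequently, if D ≥ 0 and h̄(x) ≤ D for all x, then μ'(s) ≥ 1/(1+D). -/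
/-- If `P` agrees with `P̄` on the rows of the target policy `π†`, `μ'` is a stationary
distribution of the kernel induced by `(P, π†{s;a})`, and `h̄` is a nonnegative
hitting-time solution for target `s` under the kernel induced by `(P̄, π†)`, then
`μ' s * (1 + ∑_{s' ≠ s} P s a s' * h̄ s') = 1`; consequently, if `0 ≤ D` and
`h̄ x ≤ D` for all `x`, then `μ' s ≥ 1 / (1 + D)`. -/
theorem neighbor_stationary_identity_and_bound
    {S A : Type*} [Fintype S] [Nonempty S] [DecidableEq S]
    (P Pbar : S → A → S → ℝ)
    (hP_nonneg : ∀ s a s', 0 ≤ P s a s')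
    (hP_row : ∀ s a, ∑ s', P s a s' = 1)
    (hPbar_nonneg : ∀ s a s', 0 ≤ Pbar s a s')
    (hPbar_row : ∀ s a, ∑ s', Pbar s a s' = 1)
    (πd : S → A)
    (hagree : ∀ x s', P x (πd x) s' = Pbar x (πd x) s')
    (s : S) (a : A) (ha : a ≠ πd s)
    -- the neighbor policy π†{s;a}
    (πn : S → A) (hπn_s : πn s = a) (hπn : ∀ x, x ≠ s → πn x = πd x)
    -- μ' is a stationary distribution of the kernel induced by (P, π†{s;a})
    (μ' : S → ℝ)
    (hμ'_nonneg : ∀ x, 0 ≤ μ' x)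
    (hμ'_sum : ∑ x, μ' x = 1)
    (hμ'_stat : ∀ y, μ' y = ∑ x, μ' x * P x (πn x) y)
    -- h̄ is a hitting-time solution for target s under the kernel induced by (P̄, π†)
    (hbar : S → ℝ)
    (hhbar_s : hbar s = 0)
    (hhbar : ∀ x, x ≠ s → hbar x = 1 + ∑ y, Pbar x (πd x) y * hbar y)
    (hhbar_nonneg : ∀ x, 0 ≤ hbar x) :
    μ' s * (1 + ∑ s' ∈ Finset.univ.filter (fun s' => s' ≠ s), P s a s' * hbar s') = 1
      ∧ ∀ D : ℝ, 0 ≤ D → (∀ x, hbar x ≤ D) → 1 / (1 + D) ≤ μ' s := by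

  classical
  set T : ℝ := ∑ s' ∈ Finset.univ.filter (fun s' => s' ≠ s), P s a s' * hbar s' with hT
  have hfilter : Finset.univ.filter (fun s' => s' ≠ s) = Finset.univ.erase s := by
    ext x; simp [Finset.mem_erase, and_comm]
  -- T as a full sum
  have hTfull : ∑ y, P s a y * hbar y = T := by
    rw [hT, hfilter, ← Finset.add_sum_erase _ _ (Finset.mem_univ s), hhbar_s]
    ring
  have key : ∑ y, μ' y * hbar y = ∑ x, μ' x * ∑ y, P x (πn x) y * hbar y := by
    calc ∑ y, μ' y * hbar y = ∑ y, (∑ x, μ' x * P x (πn x) y) * hbar y := by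
          simp_rw [← hμ'_stat]
      _ = ∑ y, ∑ x, μ' x * P x (πn x) y * hbar y := by simp [Finset.sum_mul]
      _ = ∑ x, ∑ y, μ' x * P x (πn x) y * hbar y := Finset.sum_comm
      _ = ∑ x, μ' x * ∑ y, P x (πn x) y * hbar y := by
          simp [Finset.mul_sum, mul_assoc]
  have hrow : ∀ x, x ≠ s → ∑ y, P x (πn x) y * hbar y = hbar x - 1 := by
    intro x hx
    rw [hπn x hx]
    simp_rw [hagree]
    linarith [hhbar x hx]
  -- split both sides over s and erase s
  have hsplit : ∀ f : S → ℝ, ∑ x, f x = f s + ∑ x ∈ Finset.univ.erase s, f x :=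
    fun f => (Finset.add_sum_erase _ f (Finset.mem_univ s)).symm
  have hL : ∑ y, μ' y * hbar y = ∑ x ∈ Finset.univ.erase s, μ' x * hbar x := by
    rw [hsplit (fun y => μ' y * hbar y), hhbar_s]; ring
  have hR : ∑ x, μ' x * ∑ y, P x (πn x) y * hbar y
      = μ' s * T + ∑ x ∈ Finset.univ.erase s, μ' x * (hbar x - 1) := by
    rw [hsplit (fun x => μ' x * ∑ y, P x (πn x) y * hbar y), hπn_s, hTfull]
    congr 1
    exact Finset.sum_congr rfl (fun x hx => by
      rw [hrow x (Finset.ne_of_mem_erase hx)])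
  have hsum_erase : ∑ x ∈ Finset.univ.erase s, μ' x = 1 - μ' s := by
    have := hsplit μ'
    rw [hμ'_sum] at this; linarith
  have hmain : μ' s * (1 + T) = 1 := by
    have h1 := key
    rw [hL, hR] at h1
    have h2 : ∑ x ∈ Finset.univ.erase s, μ' x * (hbar x - 1)
        = ∑ x ∈ Finset.univ.erase s, μ' x * hbar x - ∑ x ∈ Finset.univ.erase s, μ' x := by
      rw [← Finset.sum_sub_distrib]
      exact Finset.sum_congr rfl (fun x _ => by ring)
    rw [h2, hsum_erase] at h1
    linarith
  refine ⟨hmain, fun D hD hle => ?_⟩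
  have hT0 : 0 ≤ T := Finset.sum_nonneg fun x _ =>
    mul_nonneg (hP_nonneg _ _ _) (hhbar_nonneg _)
  have hTD : T ≤ D := by
    calc T ≤ ∑ s' ∈ Finset.univ.filter (fun s' => s' ≠ s), P s a s' * D :=
          Finset.sum_le_sum fun x _ =>
            mul_le_mul_of_nonneg_left (hle x) (hP_nonneg _ _ _)
      _ = (∑ s' ∈ Finset.univ.filter (fun s' => s' ≠ s), P s a s') * D := by
          rw [Finset.sum_mul]
      _ ≤ (∑ s', P s a s') * D := by
          apply mul_le_mul_of_nonneg_right _ hD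
          exact Finset.sum_le_sum_of_subset_of_nonneg (Finset.filter_subset _ _)
            (fun x _ _ => hP_nonneg _ _ _)
      _ = D := by rw [hP_row]; ring
  have hpos : 0 < 1 + T := by linarith
  have hμs : μ' s = 1 / (1 + T) := by
    field_simp
    linarith [hmain]
  rw [hμs]
  apply one_div_le_one_div_of_le hpos
  linarith
end

section
/- Let P be a transition kernel, R : S × A → ℝ, π a deterministic policy, and suppose (ρ, V) satisfies the average-reward evaluation (Poisson) equation for (P, R, π). Fix s ∈ S and a ≠ π(s), let π' = π{s;a}, let μ' be a stationary distribution of the Markov kernel induced by (P, π'), and set ρ' = Σ_x μ'(x)·R(x, π'(x)). Then ρ' − ρ = μ'(s) · (Q(s,a) − Q(s,π(s))), where Q(s,b) = R(s,b) − ρ + Σ_y P(s,b,y)·V(y). -/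
/-- Performance-difference identity for neighbor policies: if `(ρ, V)` satisfies the
average-reward evaluation (Poisson) equation for `(P, R, π)`, `π' = π{s;a}` with
`a ≠ π s`, `μ'` is a stationary distribution of the kernel induced by `(P, π')`, and
`ρ' = ∑ x, μ' x * R x (π' x)`, then
`ρ' - ρ = μ' s * (Q s a - Q s (π s))` where `Q s b = R s b - ρ + ∑ y, P s b y * V y`. -/
theorem neighbor_gain_difference
    {S A : Type*} [Fintype S] [Nonempty S] [DecidableEq S]
    (P : S → A → S → ℝ)
    (hP_nonneg : ∀ s a s', 0 ≤ P s a s')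
    (hP_row : ∀ s a, ∑ s', P s a s' = 1)
    (R : S → A → ℝ)
    (π : S → A)
    (ρ : ℝ) (V : S → ℝ)
    (hPoisson : ∀ x, ρ + V x = R x (π x) + ∑ y, P x (π x) y * V y)
    (s : S) (a : A) (ha : a ≠ π s)
    -- the neighbor policy π' = π{s;a}
    (π' : S → A) (hπ'_s : π' s = a) (hπ' : ∀ x, x ≠ s → π' x = π x)
    -- μ' is a stationary distribution of the kernel induced by (P, π')
    (μ' : S → ℝ)
    (hμ'_nonneg : ∀ x, 0 ≤ μ' x)
    (hμ'_sum : ∑ x, μ' x = 1)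
    (hμ'_stat : ∀ y, μ' y = ∑ x, μ' x * P x (π' x) y)
    (ρ' : ℝ) (hρ' : ρ' = ∑ x, μ' x * R x (π' x))
    -- the Q-values of π at state s
    (Q : S → A → ℝ) (hQ : ∀ b, Q s b = R s b - ρ + ∑ y, P s b y * V y) :
    ρ' - ρ = μ' s * (Q s a - Q s (π s)) := by

  have key : ∑ x, μ' x * (∑ y, P x (π' x) y * V y) = ∑ x, μ' x * V x := by
    calc ∑ x, μ' x * (∑ y, P x (π' x) y * V y)
        = ∑ x, ∑ y, μ' x * P x (π' x) y * V y := by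
          simp_rw [Finset.mul_sum, mul_assoc]
      _ = ∑ y, (∑ x, μ' x * P x (π' x) y) * V y := by
          rw [Finset.sum_comm]; simp_rw [Finset.sum_mul]
      _ = ∑ y, μ' y * V y := by simp_rw [← hμ'_stat]
  have hexp : ρ' - ρ = ∑ x, μ' x * (R x (π' x) + (∑ y, P x (π' x) y * V y) - V x - ρ) := by
    have h1 : ∑ x, μ' x * ρ = ρ := by
      rw [← Finset.sum_mul, hμ'_sum, one_mul]
    simp_rw [mul_sub, mul_add]
    rw [Finset.sum_sub_distrib, Finset.sum_sub_distrib, Finset.sum_add_distrib, key, h1, hρ']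
    ring
  rw [hexp, Finset.sum_eq_single s]
  · have hQπ : Q s (π s) = V s := by
      rw [hQ]; have := hPoisson s; linarith
    rw [hπ'_s, hQπ, hQ]
    ring
  · intro x _ hx
    rw [hπ' x hx]
    have := hPoisson x
    have : R x (π x) + (∑ y, P x (π x) y * V y) - V x - ρ = 0 := by linarith
    rw [this, mul_zero]
  · intro h; exact absurd (Finset.mem_univ s) h
end

section
/- Let P̄ be a transition kernel, R̄ : S × A → ℝ, π† a policy, and suppose (ρ̄, V̄) satisfies the average-reward evaluation (Poisson) equation for (P̄, R̄, π†). Let P be a transition kernel with P(x, π†(x), s') = P̄(x, π†(x), s') for all x, s'. Fix s ∈ S, a ≠ π†(s), and ε ∈ ℝ; let μ' be a stationary distribution of the Markov kernel induced by (P, π†{s;a}) with μ'(s) > 0, set ρ' = Σ_x μ'(x)·R̄(x, π†{s;a}(x)), and let h̄ be a hitting-time solution for target s under the Markov kernel induced by (P̄, π†). Set B̄(s) = Σ_{s'} P̄(s, π†(s), s')·V̄(s'). Then ρ̄ ≥ ρ' + ε if and only if R̄(s, π†(s)) + B̄(s) − R̄(s, a) ≥ ε + Σ_{s'} P(s,a,s')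 · (V̄(s') + ε·h̄(s')·1[s' ≠ s]). -/
/-- Per-state-action core of the reformulation of the dynamics-poisoning problem (P7)
as the linear problem (P8): `ρ̄ ≥ ρ' + ε` holds iff
`R̄(s,π†(s)) + B̄(s) - R̄(s,a) ≥ ε + ∑_{s'} P(s,a,s') ⬝ (V̄(s') + ε·h̄(s')·1[s' ≠ s])`. -/
theorem poisoning_constraint_reformulation
    {S A : Type*} [Fintype S] [Nonempty S] [DecidableEq S]
    (Pbar : S → A → S → ℝ)
    (hPbar_nonneg : ∀ s a s', 0 ≤ Pbar s a s')
    (hPbar_row : ∀ s a, ∑ s', Pbar s a s' = 1)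
    (Rbar : S → A → ℝ)
    (πd : S → A)
    (ρbar : ℝ) (Vbar : S → ℝ)
    (hPoisson : ∀ x, ρbar + Vbar x = Rbar x (πd x) + ∑ y, Pbar x (πd x) y * Vbar y)
    (P : S → A → S → ℝ)
    (hP_nonneg : ∀ s a s', 0 ≤ P s a s')
    (hP_row : ∀ s a, ∑ s', P s a s' = 1)
    (hagree : ∀ x s', P x (πd x) s' = Pbar x (πd x) s')
    (s : S) (a : A) (ha : a ≠ πd s) (ε : ℝ)
    -- the neighbor policy π†{s;a}
    (πn : S → A) (hπn_s : πn s = a) (hπn : ∀ x, x ≠ s → πn x = πd x)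
    -- μ' is a stationary distribution of the kernel induced by (P, π†{s;a}), with μ'(s) > 0
    (μ' : S → ℝ)
    (hμ'_nonneg : ∀ x, 0 ≤ μ' x)
    (hμ'_sum : ∑ x, μ' x = 1)
    (hμ'_stat : ∀ y, μ' y = ∑ x, μ' x * P x (πn x) y)
    (hμ'_pos : 0 < μ' s)
    (ρ' : ℝ) (hρ' : ρ' = ∑ x, μ' x * Rbar x (πn x))
    -- h̄ is a hitting-time solution for target s under the kernel induced by (P̄, π†)
    (hbar : S → ℝ)
    (hhbar_s : hbar s = 0)
    (hhbar : ∀ x, x ≠ s → hbar x = 1 + ∑ y, Pbar x (πd x) y * hbar y)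
    (Bbar : S → ℝ) (hBbar : ∀ x, Bbar x = ∑ s', Pbar x (πd x) s' * Vbar s') :
    ρbar ≥ ρ' + ε ↔
      Rbar s (πd s) + Bbar s - Rbar s a ≥
        ε + ∑ s', P s a s' * (Vbar s' + ε * hbar s' * (if s' ≠ s then 1 else 0)) := by
  classical
  set W : S → ℝ := fun x => Vbar x + ε * hbar x with hWdef
  have hWs : W s = Vbar s := by simp [hWdef, hhbar_s]
  have hind : ∀ s', Vbar s' + ε * hbar s' * (if s' ≠ s then 1 else 0) = W s' := by
    intro s'
    by_cases h : s' = s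
    · simp [h, hhbar_s, hWdef]
    · simp [h, hWdef]
  set f : S → ℝ := fun x => Rbar x (πn x) + (∑ y, P x (πn x) y * W y) - W x with hfdef
  have hbracket : ∀ x, x ≠ s → f x = ρbar - ε := by
    intro x hx
    have h1 : πn x = πd x := hπn x hx
    have hsum : (∑ y, P x (πn x) y * W y)
        = (∑ y, Pbar x (πd x) y * Vbar y) + ε * (∑ y, Pbar x (πd x) y * hbar y) := by
      rw [Finset.mul_sum, ← Finset.sum_add_distrib]
      refine Finset.sum_congr rfl fun y _ => ?_
      rw [h1, hagree x y]
      simp only [hWdef]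
      ring
    have hp := hPoisson x
    have hh := hhbar x hx
    simp only [hfdef]
    rw [hsum, h1]
    simp only [hWdef]
    linear_combination (-1 : ℝ) * hp + (-ε) * hh
  have hswap : (∑ x, μ' x * ∑ y, P x (πn x) y * W y) = ∑ y, μ' y * W y := by
    calc (∑ x, μ' x * ∑ y, P x (πn x) y * W y)
        = ∑ x, ∑ y, μ' x * P x (πn x) y * W y := by
          refine Finset.sum_congr rfl fun x _ => ?_
          rw [Finset.mul_sum]
          exact Finset.sum_congr rfl fun y _ => by ring
      _ = ∑ y, ∑ x, μ' x * P x (πn x) y * W y := Finset.sum_comm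
      _ = ∑ y, (∑ x, μ' x * P x (πn x) y) * W y := by
          refine Finset.sum_congr rfl fun y _ => ?_
          rw [Finset.sum_mul]
      _ = ∑ y, μ' y * W y := by
          refine Finset.sum_congr rfl fun y _ => by rw [← hμ'_stat]
  have hsumf : (∑ x, μ' x * f x) = ρ' := by
    have hexp : (∑ x, μ' x * f x)
        = (∑ x, μ' x * Rbar x (πn x)) + (∑ x, μ' x * ∑ y, P x (πn x) y * W y)
          - ∑ x, μ' x * W x := by
      simp only [hfdef, mul_add, mul_sub]
      rw [Finset.sum_sub_distrib, Finset.sum_add_distrib]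
    rw [hexp, hswap, hρ']
    ring
  have hmu : (∑ x ∈ Finset.univ \ {s}, μ' x) = 1 - μ' s := by
    have h := Finset.sum_eq_sum_sdiff_singleton_add (Finset.mem_univ s) μ'
    rw [hμ'_sum] at h
    linarith
  have hsplit : (∑ x, μ' x * f x) = (1 - μ' s) * (ρbar - ε) + μ' s * f s := by
    have h := Finset.sum_eq_sum_sdiff_singleton_add (Finset.mem_univ s)
      (fun x => μ' x * f x)
    rw [h]
    have h2 : (∑ x ∈ Finset.univ \ {s}, μ' x * f x)
        = ∑ x ∈ Finset.univ \ {s}, μ' x * (ρbar - ε) := by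
      refine Finset.sum_congr rfl fun x hx => ?_
      have hxs : x ≠ s := by
        simp only [Finset.mem_sdiff, Finset.mem_singleton] at hx
        exact hx.2
      rw [hbracket x hxs]
    rw [h2, ← Finset.sum_mul, hmu]
  have key : ρbar - ε - ρ' = μ' s * (ρbar - ε - f s) := by
    rw [← hsumf, hsplit]
    ring
  have hfs : f s = Rbar s a + (∑ y, P s a y * W y) - Vbar s := by
    simp only [hfdef, hπn_s, hWs]
  have hpB : Rbar s (πd s) + Bbar s = ρbar + Vbar s := by
    rw [hBbar s, ← hPoisson s]
  have hgoal : (∑ s', P s a s' * (Vbar s' + ε * hbar s' * (if s' ≠ s then 1 else 0)))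
      = ∑ y, P s a y * W y :=
    Finset.sum_congr rfl fun y _ => by rw [hind]
  rw [hgoal]
  constructor
  · intro h
    have h2 : 0 ≤ μ' s * (ρbar - ε - f s) := by linarith
    have h3 : 0 ≤ ρbar - ε - f s := by
      by_contra hc
      push_neg at hc
      nlinarith [mul_pos hμ'_pos (by linarith : 0 < f s - (ρbar - ε))]
    rw [hfs] at h3
    linarith
  · intro h
    have h3 : 0 ≤ ρbar - ε - f s := by rw [hfs]; linarith
    have h2 : 0 ≤ μ' s * (ρbar - ε - f s) := mul_nonneg (le_of_lt hμ'_pos) h3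
    linarith
end

section
/- Let P̄ be a transition kernel, R̄ : S × A → ℝ, V̄ : S → ℝ, T̄ : S × S → ℝ, π† a policy, ε ∈ ℝ, and δ ∈ [0,1]. Define B̄(s) = Σ_{s'} P̄(s, π†(s), s')·V̄(s'), Ū(s,s') = V̄(s') + ε·T̄(s',s)·1[s' ≠ s], and C(s,a) = R̄(s, π†(s)) + B̄(s) − R̄(s, a) − (1−δ)·min_{s'} Ū(s,s') − δ·Σ_{s'} P̄(s,a,s')·Ū(s,s'). Then there exists a transition kernel P satisfying (i) R̄(s, π†(s)) + B̄(s) − R̄(s, a) ≥ ε + Σ_{s'} P(s,a,s')·Ū(s,s') for all s and all a ≠ π†(s), (ii) P(s,a,s') ≥ δ·P̄(s,a,s') for all s,a,s', and (iii) P(s, π†(s), s') = P̄(s, π†(s), s') for all s,s', if and only if C(s,a) ≥ ε for all s and all a ≠ π†(s). -/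
/-- Exact feasibility characterization of the reformulated dynamics-poisoning
problem (P8): a transition kernel `P` satisfying the constraints (i)-(iii) exists
iff `C(s,a) ≥ ε` for all `s` and all `a ≠ π†(s)`. -/
theorem poisoning_feasibility_characterization
    {S A : Type*} [Fintype S] [Nonempty S] [Fintype A] [Nonempty A] [DecidableEq S]
    (Pbar : S → A → S → ℝ)
    (hPbar_nonneg : ∀ s a s', 0 ≤ Pbar s a s')
    (hPbar_row : ∀ s a, ∑ s', Pbar s a s' = 1)
    (Rbar : S → A → ℝ) (Vbar : S → ℝ) (Tbar : S → S → ℝ)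
    (πd : S → A)
    (ε : ℝ) (δ : ℝ) (hδ0 : 0 ≤ δ) (hδ1 : δ ≤ 1)
    (Bbar : S → ℝ) (hBbar : ∀ s, Bbar s = ∑ s', Pbar s (πd s) s' * Vbar s')
    (U : S → S → ℝ)
    (hU : ∀ s s', U s s' = Vbar s' + ε * Tbar s' s * (if s' ≠ s then 1 else 0))
    (C : S → A → ℝ)
    (hC : ∀ s a, C s a = Rbar s (πd s) + Bbar s - Rbar s a
        - (1 - δ) * (⨅ s', U s s') - δ * ∑ s', Pbar s a s' * U s s') :
    (∃ P : S → A → S → ℝ,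
        (∀ s a s', 0 ≤ P s a s') ∧ (∀ s a, ∑ s', P s a s' = 1) ∧
        (∀ s a, a ≠ πd s →
          Rbar s (πd s) + Bbar s - Rbar s a ≥ ε + ∑ s', P s a s' * U s s') ∧
        (∀ s a s', P s a s' ≥ δ * Pbar s a s') ∧
        (∀ s s', P s (πd s) s' = Pbar s (πd s) s')) ↔
      (∀ s a, a ≠ πd s → C s a ≥ ε) := by
  classical
  have hbdd : ∀ s : S, BddBelow (Set.range fun s' => U s s') :=
    fun s => (Set.finite_range _).bddBelow
  have hinf_le : ∀ s s', (⨅ t, U s t) ≤ U s s' := fun s s' => ciInf_le (hbdd s) s'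
  obtain ⟨m, hm⟩ : ∃ m : S → S, ∀ s, (⨅ t, U s t) = U s (m s) := by
    choose m hm using fun s => Finite.exists_min (fun s' => U s s')
    exact ⟨m, fun s => le_antisymm (ciInf_le (hbdd s) (m s)) (le_ciInf (hm s))⟩
  constructor
  · rintro ⟨P, hP0, hProw, hPi, hPii, _⟩ s a ha
    have h1 := hPi s a ha
    have hQnn : ∀ s', 0 ≤ P s a s' - δ * Pbar s a s' :=
      fun s' => sub_nonneg.2 (hPii s a s')
    have hQsum : ∑ s', (P s a s' - δ * Pbar s a s') = 1 - δ := by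
      rw [Finset.sum_sub_distrib, ← Finset.mul_sum, hProw, hPbar_row, mul_one]
    have h2 : (1 - δ) * (⨅ t, U s t)
        ≤ ∑ s', (P s a s' - δ * Pbar s a s') * U s s' := by
      calc (1 - δ) * (⨅ t, U s t)
          = ∑ s', (P s a s' - δ * Pbar s a s') * (⨅ t, U s t) := by
            rw [← Finset.sum_mul, hQsum]
        _ ≤ ∑ s', (P s a s' - δ * Pbar s a s') * U s s' :=
            Finset.sum_le_sum fun s' _ =>
              mul_le_mul_of_nonneg_left (hinf_le s s') (hQnn s')
    have h3 : ∑ s', (P s a s' - δ * Pbar s a s') * U s s'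
        = ∑ s', P s a s' * U s s' - δ * ∑ s', Pbar s a s' * U s s' := by
      rw [Finset.mul_sum, ← Finset.sum_sub_distrib]
      exact Finset.sum_congr rfl fun s' _ => by ring
    rw [hC]
    rw [h3] at h2
    linarith
  · intro hCge
    refine ⟨fun s a s' => if a = πd s then Pbar s a s'
        else δ * Pbar s a s' + (1 - δ) * (if s' = m s then 1 else 0),
      ?_, ?_, ?_, ?_, ?_⟩
    · intro s a s'
      by_cases h : a = πd s
      · simp only [if_pos h]; exact hPbar_nonneg s a s'
      · simp only [if_neg h]
        have h0 : (0:ℝ) ≤ (if s' = m s then (1:ℝ) else 0) := by positivity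
        have h1 : (0:ℝ) ≤ δ * Pbar s a s' := mul_nonneg hδ0 (hPbar_nonneg s a s')
        nlinarith
    · intro s a
      by_cases h : a = πd s
      · simp [h, hPbar_row]
      · simp only [if_neg h]
        rw [Finset.sum_add_distrib, ← Finset.mul_sum, hPbar_row, ← Finset.mul_sum]
        rw [Finset.sum_ite_eq' Finset.univ (m s) (fun _ => (1:ℝ))]
        simp
    · intro s a ha
      have hc := hCge s a ha
      rw [hC] at hc
      simp only [if_neg ha]
      have hsum : ∑ s', (δ * Pbar s a s' + (1 - δ) * (if s' = m s then 1 else 0)) * U s s'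
          = δ * (∑ s', Pbar s a s' * U s s') + (1 - δ) * U s (m s) := by
        rw [Finset.mul_sum]
        have : ∀ s' ∈ Finset.univ,
            (δ * Pbar s a s' + (1 - δ) * (if s' = m s then 1 else 0)) * U s s'
            = δ * (Pbar s a s' * U s s')
              + (if s' = m s then (1 - δ) * U s s' else 0) := by
          intro s' _
          by_cases h : s' = m s <;> simp [h] <;> ring
        rw [Finset.sum_congr rfl this, Finset.sum_add_distrib,
          Finset.sum_ite_eq' Finset.univ (m s) (fun s' => (1 - δ) * U s s')]
        simp
      rw [hsum, ← hm s]
      linarith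
    · intro s a s'
      by_cases h : a = πd s
      · simp only [if_pos h]
        have := hPbar_nonneg s a s'
        nlinarith
      · simp only [if_neg h]
        have : (0:ℝ) ≤ (if s' = m s then (1:ℝ) else 0) := by positivity
        nlinarith
    · intro s s'; simp
end

section
/- Let P̄ be a transition kernel, R̄ : S × A → ℝ, V̄ : S → ℝ, T̄ : S × S → ℝ, π† a policy, ε ∈ ℝ, and δ ∈ [0,1]. Define B̄(s) = Σ_{s'} P̄(s, π†(s), s')·V̄(s'), Ū(s,s') = V̄(s') + ε·T̄(s',s)·1[s' ≠ s], and C(s,a) = R̄(s, π†(s)) + B̄(s) − R̄(s, a) − (1−δ)·min_{s'} Ū(s,s') − δ·Σ_{s'} P̄(s,a,s')·Ū(s,s'). Assume C(s,a) ≥ ε for all s and all a ≠ π†(s). For each s with a ≠ π†(s) choose s_min(s) ∈ argmin_{s''} Ū(s, s''), and define P̂ by P̂(s, π†(s), s') = P̄(s, π†(s), s'), and for a ≠ π†(s): P̂(s,a,s') = δ·P̄(s,a,s') + (1−δ)·1[s' = s_min(s)]. Then P̂ is a transition kernel and it satisfies: (i) R̄(s, π†(s)) + B̄(s) − R̄(s,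 a) ≥ ε + Σ_{s'} P̂(s,a,s')·Ū(s,s') for all s and all a ≠ π†(s); (ii) P̂(s,a,s') ≥ δ·P̄(s,a,s') for all s,a,s'; (iii) P̂(s, π†(s), s') = P̄(s, π†(s), s') for all s,s'. -/
/-- Explicit feasible attack construction for the sufficiency direction of the
feasibility characterization of problem (P8): under `C(s,a) ≥ ε` for all `s` and
`a ≠ π†(s)`, the kernel `P̂` that keeps the `π†`-rows and otherwise mixes
`δ·P̄(s,a,·)` with mass `1-δ` on `s_min(s) ∈ argmin_{s''} Ū(s,s'')` is a transition
kernel satisfying constraints (i)-(iii). -/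
theorem poisoning_explicit_construction
    {S A : Type*} [Fintype S] [Nonempty S] [Fintype A] [Nonempty A]
    [DecidableEq S] [DecidableEq A]
    (Pbar : S → A → S → ℝ)
    (hPbar_nonneg : ∀ s a s', 0 ≤ Pbar s a s')
    (hPbar_row : ∀ s a, ∑ s', Pbar s a s' = 1)
    (Rbar : S → A → ℝ) (Vbar : S → ℝ) (Tbar : S → S → ℝ)
    (πd : S → A)
    (ε : ℝ) (δ : ℝ) (hδ0 : 0 ≤ δ) (hδ1 : δ ≤ 1)
    (Bbar : S → ℝ) (hBbar : ∀ s, Bbar s = ∑ s', Pbar s (πd s) s' * Vbar s')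
    (U : S → S → ℝ)
    (hU : ∀ s s', U s s' = Vbar s' + ε * Tbar s' s * (if s' ≠ s then 1 else 0))
    (C : S → A → ℝ)
    (hC : ∀ s a, C s a = Rbar s (πd s) + Bbar s - Rbar s a
        - (1 - δ) * (⨅ s', U s s') - δ * ∑ s', Pbar s a s' * U s s')
    (hfeas : ∀ s a, a ≠ πd s → C s a ≥ ε)
    -- choice of a minimizer s_min(s) ∈ argmin_{s''} Ū(s,s'')
    (smin : S → S) (hsmin : ∀ s s'', U s (smin s) ≤ U s s'')
    -- the constructed attack kernel P̂
    (Phat : S → A → S → ℝ)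
    (hPhat_target : ∀ s s', Phat s (πd s) s' = Pbar s (πd s) s')
    (hPhat_other : ∀ s a s', a ≠ πd s →
      Phat s a s' = δ * Pbar s a s' + (1 - δ) * (if s' = smin s then 1 else 0)) :
    ((∀ s a s', 0 ≤ Phat s a s') ∧ (∀ s a, ∑ s', Phat s a s' = 1)) ∧
    (∀ s a, a ≠ πd s →
      Rbar s (πd s) + Bbar s - Rbar s a ≥ ε + ∑ s', Phat s a s' * U s s') ∧
    (∀ s a s', Phat s a s' ≥ δ * Pbar s a s') ∧
    (∀ s s', Phat s (πd s) s' = Pbar s (πd s) s') := by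
  have hInf : ∀ s, (⨅ s', U s s') = U s (smin s) := by
    intro s
    apply le_antisymm
    · exact ciInf_le (Finite.bddBelow_range _) (smin s)
    · exact le_ciInf (fun s'' => hsmin s s'')
  have hsum : ∀ s a, a ≠ πd s →
      ∑ s', Phat s a s' * U s s'
        = δ * (∑ s', Pbar s a s' * U s s') + (1 - δ) * U s (smin s) := by
    intro s a ha
    have : ∀ s', Phat s a s' * U s s'
        = δ * (Pbar s a s' * U s s')
          + (1 - δ) * (if s' = smin s then U s s' else 0) := by
      intro s'
      rw [hPhat_other s a s' ha]
      by_cases h : s' = smin s <;> simp [h] <;> ring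
    rw [Finset.sum_congr rfl (fun s' _ => this s'), Finset.sum_add_distrib,
      ← Finset.mul_sum, ← Finset.mul_sum, Finset.sum_ite_eq' Finset.univ (smin s)]
    simp
  refine ⟨⟨?_, ?_⟩, ?_, ?_, fun s s' => hPhat_target s s'⟩
  · intro s a s'
    by_cases ha : a = πd s
    · rw [ha, hPhat_target]; exact hPbar_nonneg s _ s'
    · rw [hPhat_other s a s' ha]
      have h1 : 0 ≤ δ * Pbar s a s' := mul_nonneg hδ0 (hPbar_nonneg s a s')
      have h2 : 0 ≤ (1 - δ) * (if s' = smin s then (1:ℝ) else 0) := by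
        apply mul_nonneg (by linarith)
        split <;> norm_num
      linarith
  · intro s a
    by_cases ha : a = πd s
    · rw [ha]
      simp only [hPhat_target]
      exact hPbar_row s _
    · have : ∀ s', Phat s a s' = δ * Pbar s a s' + (1 - δ) * (if s' = smin s then 1 else 0) :=
        fun s' => hPhat_other s a s' ha
      rw [Finset.sum_congr rfl (fun s' _ => this s'), Finset.sum_add_distrib,
        ← Finset.mul_sum, ← Finset.mul_sum, hPbar_row,
        Finset.sum_ite_eq' Finset.univ (smin s)]
      simp
  · intro s a ha
    have hfs := hfeas s a ha
    rw [hC, hInf] at hfs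
    rw [hsum s a ha]
    linarith
  · intro s a s'
    by_cases ha : a = πd s
    · rw [ha, hPhat_target]
      nlinarith [hPbar_nonneg s (πd s) s']
    · rw [hPhat_other s a s' ha]
      have : 0 ≤ (1 - δ) * (if s' = smin s then (1:ℝ) else 0) := by
        apply mul_nonneg (by linarith)
        split <;> norm_num
      linarith
end

section
/- Let P̄ be a transition kernel, R̄ : S × A → ℝ, V̄ : S → ℝ, T̄ : S × S → ℝ, π† a policy, ε ≥ 0, δ ∈ [0,1], and D̄ ≥ 0 with 0 ≤ T̄(s',s) ≤ D̄ for all s',s. Define B̄(s) = Σ_{s'} P̄(s, π†(s), s')·V̄(s'), Ū(s,s') = V̄(s') + ε·T̄(s',s)·1[s' ≠ s], sp(V̄) = max_{s'} V̄(s') − min_{s'} V̄(s'), and β̄_δ(s,a) = R̄(s, π†(s)) − R̄(s, a) + B̄(s) − min_{s'} V̄(s') − δ·sp(V̄). If β̄_δ(s,a) ≥ ε·(1 + D̄) for all s and all a ≠ π†(s), then there exists a transition kernel P satisfying (i) R̄(s, π†(s)) + B̄(s) − R̄(s, a) ≥ ε + Σ_{s'} P(s,a,s')·Ū(s,s') for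 all s and all a ≠ π†(s), (ii) P(s,a,s') ≥ δ·P̄(s,a,s') for all s,a,s', and (iii) P(s, π†(s), s') = P̄(s, π†(s), s') for all s,s'. -/
/-- Sufficient feasibility condition for the dynamics-poisoning attack in terms of
the margin `β̄_δ` and the diameter bound `D̄`: if `β̄_δ(s,a) ≥ ε·(1 + D̄)` for all `s`
and all `a ≠ π†(s)`, then the constraints (i)-(iii) of problem (P8) are feasible. -/
theorem poisoning_sufficient_condition
    {S A : Type*} [Fintype S] [Nonempty S] [Fintype A] [Nonempty A] [DecidableEq S]
    (Pbar : S → A → S → ℝ)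
    (hPbar_nonneg : ∀ s a s', 0 ≤ Pbar s a s')
    (hPbar_row : ∀ s a, ∑ s', Pbar s a s' = 1)
    (Rbar : S → A → ℝ) (Vbar : S → ℝ) (Tbar : S → S → ℝ)
    (πd : S → A)
    (ε : ℝ) (hε : 0 ≤ ε) (δ : ℝ) (hδ0 : 0 ≤ δ) (hδ1 : δ ≤ 1)
    (Dbar : ℝ) (hDbar0 : 0 ≤ Dbar)
    (hTbar : ∀ s' s, 0 ≤ Tbar s' s ∧ Tbar s' s ≤ Dbar)
    (Bbar : S → ℝ) (hBbar : ∀ s, Bbar s = ∑ s', Pbar s (πd s) s' * Vbar s')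
    (U : S → S → ℝ)
    (hU : ∀ s s', U s s' = Vbar s' + ε * Tbar s' s * (if s' ≠ s then 1 else 0))
    (spV : ℝ) (hspV : spV = (⨆ s', Vbar s') - (⨅ s', Vbar s'))
    (β : S → A → ℝ)
    (hβ : ∀ s a, β s a = Rbar s (πd s) - Rbar s a + Bbar s - (⨅ s', Vbar s') - δ * spV)
    (hmargin : ∀ s a, a ≠ πd s → β s a ≥ ε * (1 + Dbar)) :
    ∃ P : S → A → S → ℝ,
      (∀ s a s', 0 ≤ P s a s') ∧ (∀ s a, ∑ s', P s a s' = 1) ∧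
      (∀ s a, a ≠ πd s →
        Rbar s (πd s) + Bbar s - Rbar s a ≥ ε + ∑ s', P s a s' * U s s') ∧
      (∀ s a s', P s a s' ≥ δ * Pbar s a s') ∧
      (∀ s s', P s (πd s) s' = Pbar s (πd s) s') := by
  classical
  obtain ⟨t, ht⟩ := Finite.exists_min Vbar
  have hbdd : BddAbove (Set.range Vbar) := Set.Finite.bddAbove (Set.finite_range _)
  have hinf : (⨅ s', Vbar s') = Vbar t := by
    apply le_antisymm (ciInf_le (Set.Finite.bddBelow (Set.finite_range _)) t)
    exact le_ciInf ht
  have hsup : ∀ s', Vbar s' ≤ ⨆ s', Vbar s' := fun s' => le_ciSup hbdd s'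
  refine ⟨fun s a s' => if a = πd s then Pbar s a s'
      else δ * Pbar s a s' + (1 - δ) * (if s' = t then 1 else 0), ?_, ?_, ?_, ?_, ?_⟩
  · intro s a s'
    dsimp only
    split_ifs with h <;> nlinarith [hPbar_nonneg s a s']
  · intro s a
    by_cases h : a = πd s <;> simp [h, hPbar_row, Finset.sum_add_distrib, ← Finset.mul_sum]
  · intro s a ha
    have key : ∀ s', U s s' ≤ Vbar s' + ε * Dbar := by
      intro s'
      rw [hU]
      have h1 := (hTbar s' s).1
      have h2 := (hTbar s' s).2
      by_cases h : s' = s <;> simp [h] <;> nlinarith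
    have hsum : ∑ s', Pbar s a s' * U s s' ≤ (⨆ s', Vbar s') + ε * Dbar := by
      calc ∑ s', Pbar s a s' * U s s'
          ≤ ∑ s', Pbar s a s' * ((⨆ s', Vbar s') + ε * Dbar) := by
            apply Finset.sum_le_sum
            intro i _
            exact mul_le_mul_of_nonneg_left ((key i).trans (by linarith [hsup i]))
              (hPbar_nonneg s a i)
        _ = (⨆ s', Vbar s') + ε * Dbar := by
            rw [← Finset.sum_mul, hPbar_row]; ring
    have hUt : U s t ≤ Vbar t + ε * Dbar := key t
    have hmar := hmargin s a ha
    rw [hβ, hspV, hinf] at hmar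
    have hexp : ∑ s', (δ * Pbar s a s' + (1 - δ) * (if s' = t then 1 else 0)) * U s s'
        = δ * (∑ s', Pbar s a s' * U s s') + (1 - δ) * U s t := by
      rw [Finset.sum_congr rfl (fun i _ => by ring :
        ∀ i ∈ Finset.univ, (δ * Pbar s a i + (1 - δ) * (if i = t then 1 else 0)) * U s i
          = δ * (Pbar s a i * U s i) + (1 - δ) * ((if i = t then 1 else 0) * U s i)),
        Finset.sum_add_distrib, ← Finset.mul_sum, ← Finset.mul_sum]
      congr 1
      congr 1
      simp
    simp only [ha, if_false]
    rw [hexp]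
    have hst : Vbar t ≤ ⨆ s', Vbar s' := hsup t
    nlinarith [hsum, hUt]
  · intro s a s'
    dsimp only
    split_ifs with h <;> nlinarith [hPbar_nonneg s a s']
  · intro s s'
    simp
end

section
/- Let P̄ be a transition kernel, R̄ : S × A → ℝ, V̄ : S → ℝ, π† a policy, δ ∈ [0,1], and λ ∈ [0,1]. Fix s ∈ S and a ≠ π†(s), let s_min ∈ argmin_{s''} V̄(s''), define the probability row q(s') = δ·P̄(s,a,s') + (1−δ)·1[s' = s_min] and the attacked row p̂(s') = (1−λ)·P̄(s,a,s') + λ·q(s'). Define B̄(s) = Σ_{s'} P̄(s, π†(s), s')·V̄(s'), sp(V̄) = max_{s'} V̄(s') − min_{s'} V̄(s'), β̄_δ(s,a) = R̄(s, π†(s)) − R̄(s, a) + B̄(s) − min_{s'} V̄(s') − δ·sp(V̄), and for a row r : S → ℝ let g(r) = R̄(s,a) + Σ_{s'} r(s')·V̄(s') − R̄(s, π†(s)) − B̄(s). Then g(p̂) ≤ (1−λ)·g(P̄(s,a,·)) − λ·β̄_δ(s,a). -/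
/-- Key estimate in the upper bound of the offline dynamics-poisoning theorem:
for the attacked row `p̂ = (1-λ)·P̄(s,a,·) + λ·q` with
`q = δ·P̄(s,a,·) + (1-δ)·1[· = s_min]`, the Q-value gap functional `g` satisfies
`g(p̂) ≤ (1-λ)·g(P̄(s,a,·)) - λ·β̄_δ(s,a)`. -/
theorem interpolation_gap_estimate
    {S A : Type*} [Fintype S] [Nonempty S] [DecidableEq S]
    (Pbar : S → A → S → ℝ)
    (hPbar_nonneg : ∀ s a s', 0 ≤ Pbar s a s')
    (hPbar_row : ∀ s a, ∑ s', Pbar s a s' = 1)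
    (Rbar : S → A → ℝ) (Vbar : S → ℝ)
    (πd : S → A)
    (δ : ℝ) (hδ0 : 0 ≤ δ) (hδ1 : δ ≤ 1)
    (lam : ℝ) (hlam0 : 0 ≤ lam) (hlam1 : lam ≤ 1)
    (s : S) (a : A) (ha : a ≠ πd s)
    (smin : S) (hsmin : ∀ s'', Vbar smin ≤ Vbar s'')
    (q : S → ℝ)
    (hq : ∀ s', q s' = δ * Pbar s a s' + (1 - δ) * (if s' = smin then 1 else 0))
    (phat : S → ℝ)
    (hphat : ∀ s', phat s' = (1 - lam) * Pbar s a s' + lam * q s')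
    (Bbar : S → ℝ) (hBbar : ∀ x, Bbar x = ∑ s', Pbar x (πd x) s' * Vbar s')
    (spV : ℝ) (hspV : spV = (⨆ s', Vbar s') - (⨅ s', Vbar s'))
    (β : ℝ)
    (hβ : β = Rbar s (πd s) - Rbar s a + Bbar s - (⨅ s', Vbar s') - δ * spV)
    (g : (S → ℝ) → ℝ)
    (hg : ∀ r : S → ℝ,
      g r = Rbar s a + (∑ s', r s' * Vbar s') - Rbar s (πd s) - Bbar s) :
    g phat ≤ (1 - lam) * g (fun s' => Pbar s a s') - lam * β := by

  have hinf : (⨅ s', Vbar s') = Vbar smin :=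
    le_antisymm (ciInf_le (Set.Finite.bddBelow (Set.finite_range Vbar)) smin)
      (le_ciInf hsmin)
  have hsup : ∀ s', Vbar s' ≤ (⨆ s'', Vbar s'') := fun s' =>
    le_ciSup (Set.Finite.bddAbove (Set.finite_range Vbar)) s'
  have hPV : ∑ s', Pbar s a s' * Vbar s' ≤ ⨆ s'', Vbar s'' := by
    calc ∑ s', Pbar s a s' * Vbar s'
        ≤ ∑ s', Pbar s a s' * (⨆ s'', Vbar s'') :=
          Finset.sum_le_sum (fun i _ =>
            mul_le_mul_of_nonneg_left (hsup i) (hPbar_nonneg s a i))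
      _ = (⨆ s'', Vbar s'') := by
          rw [← Finset.sum_mul, hPbar_row, one_mul]
  have hqV : ∑ s', q s' * Vbar s'
      = δ * (∑ s', Pbar s a s' * Vbar s') + (1 - δ) * Vbar smin := by
    simp only [hq, add_mul, Finset.sum_add_distrib, mul_assoc, ← Finset.mul_sum]
    congr 2
    simp [ite_mul]
  have hphatV : ∑ s', phat s' * Vbar s'
      = (1 - lam) * (∑ s', Pbar s a s' * Vbar s') + lam * (∑ s', q s' * Vbar s') := by
    simp only [hphat, add_mul, Finset.sum_add_distrib, mul_assoc, ← Finset.mul_sum]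
  rw [hg phat, hg (fun s' => Pbar s a s'), hphatV, hqV, hβ, hinf, hspV, hinf]
  nlinarith [mul_nonneg (mul_nonneg hlam0 hδ0) (sub_nonneg.2 hPV)]
end

section
/- Let P̄ and P̂ be transition kernels, R̄ : S × A → ℝ, π† a policy, and ε ≥ 0. Suppose (ρ̄, V̄) satisfies the average-reward evaluation (Poisson) equation for (P̄, R̄, π†) and (ρ̂, V̂) satisfies it for (P̂, R̄, π†). Fix s' ∈ S and a' ≠ π†(s'). Let μ̄' be a stationary distribution of the Markov kernel induced by (P̄, π†{s';a'}) with μ̄'(s') > 0, and set ρ̄' = Σ_x μ̄'(x)·R̄(x, π†{s';a'}(x)); let μ̂' be a stationary distribution of the Markov kernel induced by (P̂, π†{s';a'}) with μ̂'(s') > 0, and set ρ̂' = Σ_x μ̂'(x)·R̄(x, π†{s';a'}(x)). Assume ρ̂ ≥ ρ̂' + ε. Define Q̄(x,b) = R̄(x,b) − ρ̄ + Σ_y P̄(x,b,y)·V̄(y) and Q̂(x,b) = R̄(x,b) − ρ̂ + Σ_y P̂(x,b,y)·V̂(y), and for f : S × A → ℝ let sp(f) = max f − min f. Then sp(Q̂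 − Q̄) ≥ ε + (ρ̄' − ρ̄)/μ̄'(s'). -/
lemma poisoning_key {S A : Type*} [Fintype S] [DecidableEq S]
    (P : S → A → S → ℝ) (R : S → A → ℝ) (πd πn : S → A) (s' : S) (a' : A)
    (hπn_s : πn s' = a') (hπn : ∀ x, x ≠ s' → πn x = πd x)
    (ρ : ℝ) (V : S → ℝ)
    (hP : ∀ x, ρ + V x = R x (πd x) + ∑ y, P x (πd x) y * V y)
    (μ : S → ℝ) (hsum : ∑ x, μ x = 1)
    (hstat : ∀ y, μ y = ∑ x, μ x * P x (πn x) y)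
    (Q : S → A → ℝ)
    (hQ : ∀ x b, Q x b = R x b - ρ + ∑ y, P x b y * V y) :
    μ s' * (Q s' a' - Q s' (πd s')) = (∑ x, μ x * R x (πn x)) - ρ := by
  have h1 : ∀ x, Q x (πd x) = V x := fun x => by
    rw [hQ]; linarith [hP x]
  have h2 : ∑ x, μ x * (Q x (πn x) - Q x (πd x))
      = μ s' * (Q s' a' - Q s' (πd s')) := by
    rw [Finset.sum_eq_single s']
    · rw [hπn_s]
    · intro x _ hx
      rw [hπn x hx, sub_self, mul_zero]
    · intro h; exact absurd (Finset.mem_univ s') h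
  have h3 : ∑ x, μ x * Q x (πn x)
      = (∑ x, μ x * R x (πn x)) - ρ + ∑ x, μ x * V x := by
    have hswap : ∑ x, μ x * ∑ y, P x (πn x) y * V y = ∑ x, μ x * V x := by
      calc ∑ x, μ x * ∑ y, P x (πn x) y * V y
          = ∑ x, ∑ y, μ x * P x (πn x) y * V y := by
            simp only [Finset.mul_sum, mul_assoc]
        _ = ∑ y, (∑ x, μ x * P x (πn x) y) * V y := by
            rw [Finset.sum_comm]; simp [Finset.sum_mul]
        _ = ∑ y, μ y * V y := by
            refine Finset.sum_congr rfl fun y _ => by rw [← hstat y]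
    calc ∑ x, μ x * Q x (πn x)
        = ∑ x, (μ x * R x (πn x) - μ x * ρ + μ x * ∑ y, P x (πn x) y * V y) := by
          refine Finset.sum_congr rfl fun x _ => by rw [hQ]; ring
      _ = (∑ x, μ x * R x (πn x)) - (∑ x, μ x) * ρ
            + ∑ x, μ x * ∑ y, P x (πn x) y * V y := by
          rw [Finset.sum_add_distrib, Finset.sum_sub_distrib, Finset.sum_mul]
      _ = (∑ x, μ x * R x (πn x)) - ρ + ∑ x, μ x * V x := by
          rw [hsum, one_mul, hswap]
  have h4 : ∑ x, μ x * Q x (πd x) = ∑ x, μ x * V x := by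
    refine Finset.sum_congr rfl fun x _ => by rw [h1]
  have h5 : ∑ x, μ x * (Q x (πn x) - Q x (πd x))
      = (∑ x, μ x * Q x (πn x)) - ∑ x, μ x * Q x (πd x) := by
    rw [← Finset.sum_sub_distrib]
    exact Finset.sum_congr rfl fun x _ => by ring
  rw [← h2, h5, h3, h4]; ring

/-- Span lower bound on the Q-value perturbation required by any successful
dynamics-poisoning attack: if the target policy beats the neighbor policy
`π†{s';a'}` by `ε` in the attacked MDP, then
`sp(Q̂ - Q̄) ≥ ε + (ρ̄' - ρ̄)/μ̄'(s')`. -/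
theorem poisoning_span_lower_bound
    {S A : Type*} [Fintype S] [Nonempty S] [Fintype A] [Nonempty A] [DecidableEq S]
    (Pbar Phat : S → A → S → ℝ)
    (hPbar_nonneg : ∀ s a s', 0 ≤ Pbar s a s')
    (hPbar_row : ∀ s a, ∑ s', Pbar s a s' = 1)
    (hPhat_nonneg : ∀ s a s', 0 ≤ Phat s a s')
    (hPhat_row : ∀ s a, ∑ s', Phat s a s' = 1)
    (Rbar : S → A → ℝ)
    (πd : S → A)
    (ε : ℝ) (hε : 0 ≤ ε)
    (ρbar : ℝ) (Vbar : S → ℝ)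
    (hPoisson_bar : ∀ x, ρbar + Vbar x = Rbar x (πd x) + ∑ y, Pbar x (πd x) y * Vbar y)
    (ρhat : ℝ) (Vhat : S → ℝ)
    (hPoisson_hat : ∀ x, ρhat + Vhat x = Rbar x (πd x) + ∑ y, Phat x (πd x) y * Vhat y)
    (s' : S) (a' : A) (ha' : a' ≠ πd s')
    -- the neighbor policy π†{s';a'}
    (πn : S → A) (hπn_s : πn s' = a') (hπn : ∀ x, x ≠ s' → πn x = πd x)
    -- μ̄' is a stationary distribution of the kernel induced by (P̄, π†{s';a'}), μ̄'(s') > 0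
    (μbar' : S → ℝ)
    (hμbar'_nonneg : ∀ x, 0 ≤ μbar' x)
    (hμbar'_sum : ∑ x, μbar' x = 1)
    (hμbar'_stat : ∀ y, μbar' y = ∑ x, μbar' x * Pbar x (πn x) y)
    (hμbar'_pos : 0 < μbar' s')
    (ρbar' : ℝ) (hρbar' : ρbar' = ∑ x, μbar' x * Rbar x (πn x))
    -- μ̂' is a stationary distribution of the kernel induced by (P̂, π†{s';a'}), μ̂'(s') > 0
    (μhat' : S → ℝ)
    (hμhat'_nonneg : ∀ x, 0 ≤ μhat' x)
    (hμhat'_sum : ∑ x, μhat' x = 1)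
    (hμhat'_stat : ∀ y, μhat' y = ∑ x, μhat' x * Phat x (πn x) y)
    (hμhat'_pos : 0 < μhat' s')
    (ρhat' : ℝ) (hρhat' : ρhat' = ∑ x, μhat' x * Rbar x (πn x))
    -- the attack is successful against the neighbor policy
    (hsucc : ρhat ≥ ρhat' + ε)
    (Qbar Qhat : S → A → ℝ)
    (hQbar : ∀ x b, Qbar x b = Rbar x b - ρbar + ∑ y, Pbar x b y * Vbar y)
    (hQhat : ∀ x b, Qhat x b = Rbar x b - ρhat + ∑ y, Phat x b y * Vhat y) :
    (⨆ q : S × A, (Qhat q.1 q.2 - Qbar q.1 q.2)) -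
        (⨅ q : S × A, (Qhat q.1 q.2 - Qbar q.1 q.2)) ≥
      ε + (ρbar' - ρbar) / μbar' s' := by
  have hkb := poisoning_key Pbar Rbar πd πn s' a' hπn_s hπn ρbar Vbar hPoisson_bar
    μbar' hμbar'_sum hμbar'_stat Qbar hQbar
  have hkh := poisoning_key Phat Rbar πd πn s' a' hπn_s hπn ρhat Vhat hPoisson_hat
    μhat' hμhat'_sum hμhat'_stat Qhat hQhat
  rw [← hρbar'] at hkb
  rw [← hρhat'] at hkh
  -- Qbar gap
  have hbar_eq : Qbar s' a' - Qbar s' (πd s') = (ρbar' - ρbar) / μbar' s' := by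
    field_simp
    linarith [hkb]
  -- μhat' s' ≤ 1
  have hμhat_le : μhat' s' ≤ 1 := by
    rw [← hμhat'_sum]
    exact Finset.single_le_sum (fun x _ => hμhat'_nonneg x) (Finset.mem_univ s')
  have hhat_le : Qhat s' a' - Qhat s' (πd s') ≤ -ε := by
    have h1 : ρhat' - ρhat ≤ -ε := by linarith
    nlinarith [hμhat'_pos, hkh]
  set f : S × A → ℝ := fun q => Qhat q.1 q.2 - Qbar q.1 q.2 with hf
  have hbdd : BddAbove (Set.range f) := (Set.finite_range f).bddAbove
  have hbdd' : BddBelow (Set.range f) := (Set.finite_range f).bddBelow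
  have hsup : f (s', πd s') ≤ ⨆ q : S × A, f q := le_ciSup hbdd (s', πd s')
  have hinf : (⨅ q : S × A, f q) ≤ f (s', a') := ciInf_le hbdd' (s', a')
  have : f (s', πd s') - f (s', a') ≥ ε + (ρbar' - ρbar) / μbar' s' := by
    simp only [hf]
    have : f (s', πd s') - f (s', a')
        = (Qhat s' (πd s') - Qhat s' a') - (Qbar s' (πd s') - Qbar s' a') := by
      simp [hf]; ring
    linarith [hbar_eq, hhat_le, this]
  have hmono : f (s', πd s') - f (s', a') ≤ iSup f - iInf f :=
    sub_le_sub hsup hinf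
  exact le_trans this hmono
end

section
/- Let P̄ be a transition kernel, R̄ : S × A → ℝ, V̄ : S → ℝ, T̄ : S × S → ℝ, π† a policy, ε ≥ 0, δ ∈ [0,1], and D̄ ≥ 0 with 0 ≤ T̄(s',s) ≤ D̄ for all s',s. Define B̄(s) = Σ_{s'} P̄(s, π†(s), s')·V̄(s'), Ū(s,s') = V̄(s') + ε·T̄(s',s)·1[s' ≠ s], sp(V̄) = max_{s'} V̄(s') − min_{s'} V̄(s'), β̄_δ(s,a) = R̄(s, π†(s)) − R̄(s, a) + B̄(s) − min_{s'} V̄(s') − δ·sp(V̄), and χ̄₀(s,a) = R̄(s,a) + Σ_{s'} P̄(s,a,s')·V̄(s') − R̄(s, π†(s)) − B̄(s). Assume β̄_δ(s,a) ≥ ε·(1+D̄) and χ̄₀(s,a) + β̄_δ(s,a) > 0 for all s and all a ≠ π†(s). Fix s_min ∈ argmin_{s''} V̄(s''). For a ≠ π†(s) set λ(s,a) = max{0, χ̄₀(s,a) + ε·(1+D̄)} / (χ̄₀(s,a) + β̄_δ(s,a)) and λ(s, π†(s)) = 0, and define P̂(s, π†(s), s') = P̄(s, π†(s), s') and, for a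 ≠ π†(s), P̂(s,a,s') = (1 − λ(s,a))·P̄(s,a,s') + λ(s,a)·( δ·P̄(s,a,s') + (1−δ)·1[s' = s_min] ). Then P̂ is a transition kernel satisfying P̂(s,a,s') ≥ δ·P̄(s,a,s') for all s,a,s'; R̄(s, π†(s)) + B̄(s) − R̄(s, a) ≥ ε + Σ_{s'} P̂(s,a,s')·Ū(s,s') for all s and all a ≠ π†(s); and for every real p ≥ 1, ( Σ_{(s,a)} ( Σ_{s'} |P̂(s,a,s') − P̄(s,a,s')| )^p )^{1/p} ≤ 2 · ( Σ_{(s,a)} λ(s,a)^p )^{1/p}. -/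
/-- Algebraic form of the upper-bound part of the offline dynamics-poisoning theorem:
the explicit interpolation attack with weights `λ(s,a)` is feasible for the
constraints of problem (P8) and its `p`-cost is at most `2·‖λ‖_p`. -/
theorem poisoning_upper_bound_attack
    {S A : Type*} [Fintype S] [Nonempty S] [Fintype A] [Nonempty A]
    [DecidableEq S] [DecidableEq A]
    (Pbar : S → A → S → ℝ)
    (hPbar_nonneg : ∀ s a s', 0 ≤ Pbar s a s')
    (hPbar_row : ∀ s a, ∑ s', Pbar s a s' = 1)
    (Rbar : S → A → ℝ) (Vbar : S → ℝ) (Tbar : S → S → ℝ)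
    (πd : S → A)
    (ε : ℝ) (hε : 0 ≤ ε) (δ : ℝ) (hδ0 : 0 ≤ δ) (hδ1 : δ ≤ 1)
    (Dbar : ℝ) (hDbar0 : 0 ≤ Dbar)
    (hTbar : ∀ s' s, 0 ≤ Tbar s' s ∧ Tbar s' s ≤ Dbar)
    (Bbar : S → ℝ) (hBbar : ∀ s, Bbar s = ∑ s', Pbar s (πd s) s' * Vbar s')
    (U : S → S → ℝ)
    (hU : ∀ s s', U s s' = Vbar s' + ε * Tbar s' s * (if s' ≠ s then 1 else 0))
    (spV : ℝ) (hspV : spV = (⨆ s', Vbar s') - (⨅ s', Vbar s'))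
    (β : S → A → ℝ)
    (hβ : ∀ s a, β s a = Rbar s (πd s) - Rbar s a + Bbar s - (⨅ s', Vbar s') - δ * spV)
    (χ : S → A → ℝ)
    (hχ : ∀ s a, χ s a = Rbar s a + (∑ s', Pbar s a s' * Vbar s')
        - Rbar s (πd s) - Bbar s)
    (hmargin : ∀ s a, a ≠ πd s → β s a ≥ ε * (1 + Dbar))
    (hpos : ∀ s a, a ≠ πd s → χ s a + β s a > 0)
    (smin : S) (hsmin : ∀ s'', Vbar smin ≤ Vbar s'')
    (lam : S → A → ℝ)
    (hlam_other : ∀ s a, a ≠ πd s →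
      lam s a = max 0 (χ s a + ε * (1 + Dbar)) / (χ s a + β s a))
    (hlam_target : ∀ s, lam s (πd s) = 0)
    (Phat : S → A → S → ℝ)
    (hPhat_target : ∀ s s', Phat s (πd s) s' = Pbar s (πd s) s')
    (hPhat_other : ∀ s a s', a ≠ πd s →
      Phat s a s' = (1 - lam s a) * Pbar s a s'
        + lam s a * (δ * Pbar s a s' + (1 - δ) * (if s' = smin then 1 else 0))) :
    ((∀ s a s', 0 ≤ Phat s a s') ∧ (∀ s a, ∑ s', Phat s a s' = 1)) ∧
    (∀ s a s', Phat s a s' ≥ δ * Pbar s a s') ∧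
    (∀ s a, a ≠ πd s →
      Rbar s (πd s) + Bbar s - Rbar s a ≥ ε + ∑ s', Phat s a s' * U s s') ∧
    (∀ p : ℝ, 1 ≤ p →
      (∑ q : S × A, (∑ s', |Phat q.1 q.2 s' - Pbar q.1 q.2 s'|) ^ p) ^ (1 / p) ≤
        2 * (∑ q : S × A, (lam q.1 q.2) ^ p) ^ (1 / p)) := by
  classical
  have hVinf : (⨅ s', Vbar s') = Vbar smin :=
    le_antisymm (ciInf_le (Finite.bddBelow_range _) smin) (le_ciInf hsmin)
  have hVsup : ∀ s', Vbar s' ≤ ⨆ s'', Vbar s'' :=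
    fun s' => le_ciSup (Finite.bddAbove_range _) s'
  have hlam0 : ∀ s a, 0 ≤ lam s a := by
    intro s a
    by_cases h : a = πd s
    · rw [h, hlam_target]
    · rw [hlam_other s a h]
      exact div_nonneg (le_max_left _ _) (le_of_lt (hpos s a h))
  have hlam1 : ∀ s a, lam s a ≤ 1 := by
    intro s a
    by_cases h : a = πd s
    · rw [h, hlam_target]; norm_num
    · rw [hlam_other s a h, div_le_one (hpos s a h)]
      refine max_le (le_of_lt (hpos s a h)) ?_
      have := hmargin s a h; linarith
  have hind : (∑ s' : S, (if s' = smin then (1:ℝ) else 0)) = 1 := by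
    simp
  have hindV : (∑ s' : S, (if s' = smin then (1:ℝ) else 0) * Vbar s') = Vbar smin := by
    rw [Finset.sum_eq_single smin]
    · simp
    · intro b _ hb; simp [hb]
    · intro hb; exact absurd (Finset.mem_univ smin) hb
  have hQmin : ∀ s a, Vbar smin ≤ ∑ s', Pbar s a s' * Vbar s' := by
    intro s a
    calc Vbar smin = ∑ s', Pbar s a s' * Vbar smin := by
          rw [← Finset.sum_mul, hPbar_row, one_mul]
      _ ≤ ∑ s', Pbar s a s' * Vbar s' :=
          Finset.sum_le_sum fun s' _ =>
            mul_le_mul_of_nonneg_left (hsmin s') (hPbar_nonneg s a s')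
  have hQmax : ∀ s a, ∑ s', Pbar s a s' * Vbar s' ≤ ⨆ s'', Vbar s'' := by
    intro s a
    calc ∑ s', Pbar s a s' * Vbar s'
        ≤ ∑ s', Pbar s a s' * (⨆ s'', Vbar s'') :=
          Finset.sum_le_sum fun s' _ =>
            mul_le_mul_of_nonneg_left (hVsup s') (hPbar_nonneg s a s')
      _ = ⨆ s'', Vbar s'' := by rw [← Finset.sum_mul, hPbar_row, one_mul]
  have hi0 : ∀ s' : S, (0:ℝ) ≤ (if s' = smin then (1:ℝ) else 0) := by
    intro s'; split <;> norm_num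
  have hPhat_eq : ∀ s a s', a ≠ πd s → Phat s a s' =
      Pbar s a s' + lam s a * (1 - δ) *
        ((if s' = smin then (1:ℝ) else 0) - Pbar s a s') := by
    intro s a s' h; rw [hPhat_other s a s' h]; ring
  have hPhat_nonneg : ∀ s a s', 0 ≤ Phat s a s' := by
    intro s a s'
    by_cases h : a = πd s
    · rw [h, hPhat_target]; exact hPbar_nonneg s (πd s) s'
    · rw [hPhat_other s a s' h]
      have h1 := hlam0 s a; have h2 := hlam1 s a
      have hp := hPbar_nonneg s a s'
      have hi := hi0 s'
      have t1 : 0 ≤ (1 - lam s a) * Pbar s a s' := mul_nonneg (by linarith) hp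
      have t2 : 0 ≤ lam s a * (δ * Pbar s a s'
          + (1 - δ) * (if s' = smin then (1:ℝ) else 0)) :=
        mul_nonneg h1 (add_nonneg (mul_nonneg hδ0 hp) (mul_nonneg (by linarith) hi))
      linarith
  have hPhat_row : ∀ s a, ∑ s', Phat s a s' = 1 := by
    intro s a
    by_cases h : a = πd s
    · rw [h]
      calc ∑ s', Phat s (πd s) s' = ∑ s', Pbar s (πd s) s' :=
            Finset.sum_congr rfl fun s' _ => hPhat_target s s'
        _ = 1 := hPbar_row s (πd s)
    · calc ∑ s', Phat s a s'
          = ∑ s', (Pbar s a s' + lam s a * (1 - δ) *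
              ((if s' = smin then (1:ℝ) else 0) - Pbar s a s')) :=
            Finset.sum_congr rfl fun s' _ => hPhat_eq s a s' h
        _ = (∑ s', Pbar s a s') + lam s a * (1 - δ) *
              ((∑ s' : S, (if s' = smin then (1:ℝ) else 0)) - ∑ s', Pbar s a s') := by
            rw [Finset.sum_add_distrib, ← Finset.mul_sum, Finset.sum_sub_distrib]
        _ = 1 := by rw [hPbar_row, hind]; ring
  have hge : ∀ s a s', Phat s a s' ≥ δ * Pbar s a s' := by
    intro s a s'
    by_cases h : a = πd s
    · rw [h, hPhat_target]
      nlinarith [hPbar_nonneg s (πd s) s']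
    · rw [hPhat_other s a s' h]
      have h1 := hlam0 s a; have h2 := hlam1 s a
      have hp := hPbar_nonneg s a s'
      have hi := hi0 s'
      nlinarith [mul_nonneg (mul_nonneg (sub_nonneg.2 hδ1) (sub_nonneg.2 h2)) hp,
        mul_nonneg (mul_nonneg h1 (sub_nonneg.2 hδ1)) hi]
  have hsumV : ∀ s a, a ≠ πd s → ∑ s', Phat s a s' * Vbar s'
      = (∑ s', Pbar s a s' * Vbar s') + lam s a * (1 - δ) *
          (Vbar smin - ∑ s', Pbar s a s' * Vbar s') := by
    intro s a h
    calc ∑ s', Phat s a s' * Vbar s'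
        = ∑ s', (Pbar s a s' * Vbar s' + lam s a * (1 - δ) *
            ((if s' = smin then (1:ℝ) else 0) * Vbar s' - Pbar s a s' * Vbar s')) := by
          refine Finset.sum_congr rfl fun s' _ => ?_
          rw [hPhat_eq s a s' h]; ring
      _ = (∑ s', Pbar s a s' * Vbar s') + lam s a * (1 - δ) *
            ((∑ s' : S, (if s' = smin then (1:ℝ) else 0) * Vbar s')
              - ∑ s', Pbar s a s' * Vbar s') := by
          rw [Finset.sum_add_distrib, ← Finset.mul_sum, Finset.sum_sub_distrib]
      _ = _ := by rw [hindV]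
  have hsumU : ∀ s a, a ≠ πd s → ∑ s', Phat s a s' * U s s'
      ≤ (∑ s', Phat s a s' * Vbar s') + ε * Dbar := by
    intro s a h
    have hstep : ∀ s' ∈ Finset.univ, Phat s a s' * U s s'
        ≤ Phat s a s' * (Vbar s' + ε * Dbar) := by
      intro s' _
      refine mul_le_mul_of_nonneg_left ?_ (hPhat_nonneg s a s')
      rw [hU]
      have h1 := (hTbar s' s).1; have h2 := (hTbar s' s).2
      split <;> nlinarith
    calc ∑ s', Phat s a s' * U s s'
        ≤ ∑ s', Phat s a s' * (Vbar s' + ε * Dbar) := Finset.sum_le_sum hstep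
      _ = (∑ s', Phat s a s' * Vbar s') + (∑ s', Phat s a s') * (ε * Dbar) := by
          rw [Finset.sum_mul, ← Finset.sum_add_distrib]
          exact Finset.sum_congr rfl fun s' _ => by ring
      _ = (∑ s', Phat s a s' * Vbar s') + ε * Dbar := by rw [hPhat_row s a]; ring
  have hkey : ∀ s a, a ≠ πd s → χ s a + ε * (1 + Dbar)
      ≤ lam s a * (1 - δ) * ((∑ s', Pbar s a s' * Vbar s') - Vbar smin) := by
    intro s a h
    by_cases hc : χ s a + ε * (1 + Dbar) ≤ 0
    · have := mul_nonneg (mul_nonneg (hlam0 s a) (by linarith : (0:ℝ) ≤ 1 - δ))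
        (by linarith [hQmin s a] : (0:ℝ) ≤ (∑ s', Pbar s a s' * Vbar s') - Vbar smin)
      linarith
    · push_neg at hc
      have hmax : max 0 (χ s a + ε * (1 + Dbar)) = χ s a + ε * (1 + Dbar) :=
        max_eq_right (le_of_lt hc)
      have hd := hpos s a h
      have hχβ : χ s a + β s a
          = (∑ s', Pbar s a s' * Vbar s') - Vbar smin - δ * spV := by
        rw [hχ, hβ, hVinf]; ring
      have hspQ : (∑ s', Pbar s a s' * Vbar s') - Vbar smin ≤ spV := by
        rw [hspV, hVinf]
        have := hQmax s a; linarith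
      have hX : χ s a + β s a
          ≤ (1 - δ) * ((∑ s', Pbar s a s' * Vbar s') - Vbar smin) := by
        have hmm : δ * ((∑ s', Pbar s a s' * Vbar s') - Vbar smin) ≤ δ * spV :=
          mul_le_mul_of_nonneg_left hspQ hδ0
        rw [hχβ]; nlinarith
      rw [hlam_other s a h, hmax, div_mul_eq_mul_div, div_mul_eq_mul_div,
        le_div_iff₀ hd]
      nlinarith [mul_le_mul_of_nonneg_left hX (le_of_lt hc)]
  have hrow : ∀ s a, ∑ s', |Phat s a s' - Pbar s a s'| ≤ 2 * lam s a := by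
    intro s a
    by_cases h : a = πd s
    · rw [h]
      have : ∀ s' : S, |Phat s (πd s) s' - Pbar s (πd s) s'| = 0 := by
        intro s'; rw [hPhat_target]; simp
      simp [this, hlam_target]
    · have habs : ∀ s' : S, |(if s' = smin then (1:ℝ) else 0) - Pbar s a s'|
          ≤ (if s' = smin then (1:ℝ) else 0) + Pbar s a s' := by
        intro s'
        have h1 := hi0 s'; have h2 := hPbar_nonneg s a s'
        rw [abs_le]; constructor <;> [linarith; linarith]
      have hsum2 : ∑ s', |(if s' = smin then (1:ℝ) else 0) - Pbar s a s'| ≤ 2 := by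
        calc ∑ s', |(if s' = smin then (1:ℝ) else 0) - Pbar s a s'|
            ≤ ∑ s', ((if s' = smin then (1:ℝ) else 0) + Pbar s a s') :=
              Finset.sum_le_sum fun s' _ => habs s'
          _ = 2 := by rw [Finset.sum_add_distrib, hind, hPbar_row]; norm_num
      have hcd : (0:ℝ) ≤ lam s a * (1 - δ) :=
        mul_nonneg (hlam0 s a) (by linarith)
      calc ∑ s', |Phat s a s' - Pbar s a s'|
          = ∑ s', lam s a * (1 - δ) *
              |(if s' = smin then (1:ℝ) else 0) - Pbar s a s'| := by
            refine Finset.sum_congr rfl fun s' _ => ?_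
            rw [hPhat_eq s a s' h]
            rw [show Pbar s a s' + lam s a * (1 - δ) *
                ((if s' = smin then (1:ℝ) else 0) - Pbar s a s') - Pbar s a s'
              = lam s a * (1 - δ) *
                ((if s' = smin then (1:ℝ) else 0) - Pbar s a s') by ring]
            rw [abs_mul, abs_of_nonneg hcd]
        _ = lam s a * (1 - δ) *
              ∑ s', |(if s' = smin then (1:ℝ) else 0) - Pbar s a s'| :=
            (Finset.mul_sum _ _ _).symm
        _ ≤ lam s a * (1 - δ) * 2 := mul_le_mul_of_nonneg_left hsum2 hcd
        _ ≤ 2 * lam s a := by nlinarith [hlam0 s a]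
  refine ⟨⟨hPhat_nonneg, hPhat_row⟩, hge, ?_, ?_⟩
  · intro s a h
    have h1 := hsumU s a h
    have h2 := hsumV s a h
    have h3 := hkey s a h
    have h4 := hχ s a
    linarith
  · intro p hp
    have hp0 : (0:ℝ) < p := lt_of_lt_of_le one_pos hp
    have hrow0 : ∀ q : S × A, 0 ≤ ∑ s', |Phat q.1 q.2 s' - Pbar q.1 q.2 s'| :=
      fun q => Finset.sum_nonneg fun s' _ => abs_nonneg _
    have step1 : (∑ q : S × A, (∑ s', |Phat q.1 q.2 s' - Pbar q.1 q.2 s'|) ^ p)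
        ≤ ∑ q : S × A, (2 * lam q.1 q.2) ^ p :=
      Finset.sum_le_sum fun q _ =>
        Real.rpow_le_rpow (hrow0 q) (hrow q.1 q.2) hp0.le
    have step2 : (∑ q : S × A, (2 * lam q.1 q.2) ^ p)
        = 2 ^ p * ∑ q : S × A, (lam q.1 q.2) ^ p := by
      rw [Finset.mul_sum]
      exact Finset.sum_congr rfl fun q _ =>
        Real.mul_rpow (by norm_num) (hlam0 q.1 q.2)
    have hsumlam0 : 0 ≤ ∑ q : S × A, (lam q.1 q.2) ^ p :=
      Finset.sum_nonneg fun q _ => Real.rpow_nonneg (hlam0 q.1 q.2) p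
    have hsumrow0 : 0 ≤ ∑ q : S × A, (∑ s', |Phat q.1 q.2 s' - Pbar q.1 q.2 s'|) ^ p :=
      Finset.sum_nonneg fun q _ => Real.rpow_nonneg (hrow0 q) p
    calc (∑ q : S × A, (∑ s', |Phat q.1 q.2 s' - Pbar q.1 q.2 s'|) ^ p) ^ (1 / p)
        ≤ (2 ^ p * ∑ q : S × A, (lam q.1 q.2) ^ p) ^ (1 / p) :=
          Real.rpow_le_rpow hsumrow0 (step1.trans_eq step2) (by positivity)
      _ = (2 ^ p) ^ (1 / p) * (∑ q : S × A, (lam q.1 q.2) ^ p) ^ (1 / p) :=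
          Real.mul_rpow (Real.rpow_nonneg (by norm_num) p) hsumlam0
      _ = 2 * (∑ q : S × A, (lam q.1 q.2) ^ p) ^ (1 / p) := by
          rw [← Real.rpow_mul (by norm_num : (0:ℝ) ≤ 2),
            mul_one_div_cancel (ne_of_gt hp0), Real.rpow_one]
end
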